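/- For every element w of the monoid M presented by ⟨x, y, e | e³ = e, xey = y, xe²y = x, xy = 1⟩, there exist p, q ∈ M such that p·w·q ∈ {1, e, e²}. -/

import Mathlib

/-- The alphabet `A = {x, y, e}`. -/
inductive Alpha : Type
  | x | y | e
  deriving DecidableEq

/-- The defining relations `e³ = e`, `xey = y`, `xe²y = x`, `xy = 1`. -/
def rel : FreeMonoid Alpha → FreeMonoid Alpha → Prop := fun a b =>
  (a = .of .e * .of .e * .of .e ∧ b = .of .e) ∨
  (a = .of .x * .of .e * .of .y ∧ b = .of .y) ∨
  (a = .of .x * .of .e * .of .e * .of .y ∧ b = .of .x) ∨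
  (a = .of .x * .of .y ∧ b = 1)

/-- The monoid `M = ⟨x, y, e | e³ = e, xey = y, xe²y = x, xy = 1⟩`. -/
abbrev M := PresentedMonoid rel

/-- The image of `x` in `M`. -/
def X : M := PresentedMonoid.of rel .x
/-- The image of `y` in `M`. -/
def Y : M := PresentedMonoid.of rel .y
/-- The image of `e` in `M`. -/
def E : M := PresentedMonoid.of rel .e

/-!
Every element of `M` factors as `l * e ^ n * r`, where `l` is a product of the blocks `y, ey, e²y`
and `r` a product of the blocks `x, xe, xe²`. Such products are closed under right multiplication
by the generators: appending `y` to `r` collapses its last block by `xy = 1`, `xey = y`, `xe²y = x`,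
and appending `e` to a nonempty `r` keeps it a product of blocks since `e³ = e`. Each `y`-block has
a left inverse (`x`, `x²`, `x²e`) and each `x`-block a right inverse (`y`, `ey²`, `y²`), so
`p * w * q = e ^ n ∈ {1, e, e²}`.
-/

open Submonoid

def leftInvertibles (N : Type*) [Monoid N] : Submonoid N where
  carrier := {a | ∃ b, b * a = 1}
  one_mem' := ⟨1, mul_one 1⟩
  mul_mem' := fun ⟨b, hb⟩ ⟨c, hc⟩ => ⟨c * b, by rw [mul_assoc, ← mul_assoc b, hb, one_mul, hc]⟩

def rightInvertibles (N : Type*) [Monoid N] : Submonoid N where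
  carrier := {a | ∃ b, a * b = 1}
  one_mem' := ⟨1, mul_one 1⟩
  mul_mem' := fun ⟨b, hb⟩ ⟨c, hc⟩ => ⟨c * b, by rw [mul_assoc, ← mul_assoc _ c, hc, one_mul, hb]⟩

theorem X_mul_Y : X * Y = 1 :=
  PresentedMonoid.mk_eq_mk_of_rel (Or.inr (Or.inr (Or.inr ⟨rfl, rfl⟩)))

theorem X_mul_E_mul_Y : X * E * Y = Y :=
  PresentedMonoid.mk_eq_mk_of_rel (Or.inr (Or.inl ⟨rfl, rfl⟩))

theorem X_mul_E_sq_mul_Y : X * E ^ 2 * Y = X := by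
  rw [sq, ← mul_assoc]
  exact PresentedMonoid.mk_eq_mk_of_rel (Or.inr (Or.inr (Or.inl ⟨rfl, rfl⟩)))

theorem E_pow_three : E ^ 3 = E := by
  rw [pow_succ, sq]
  exact PresentedMonoid.mk_eq_mk_of_rel (Or.inl ⟨rfl, rfl⟩)

theorem E_pow_eq_one_or_eq_E_or_eq_E_sq : ∀ n : ℕ, E ^ n = 1 ∨ E ^ n = E ∨ E ^ n = E ^ 2
  | 0 => .inl (pow_zero E)
  | 1 => .inr (.inl (pow_one E))
  | 2 => .inr (.inr rfl)
  | n + 3 => by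
    rw [pow_add, E_pow_three, ← pow_succ]
    exact E_pow_eq_one_or_eq_E_or_eq_E_sq (n + 1)

def yBlocks : Submonoid M := closure {Y, E * Y, E ^ 2 * Y}

def xBlocks : Submonoid M := closure {X, X * E, X * E ^ 2}

theorem yBlocks_le_leftInvertibles : yBlocks ≤ leftInvertibles M := by
  have hEY : X * X * (E * Y) = 1 := by rw [mul_assoc, ← mul_assoc X E, X_mul_E_mul_Y, X_mul_Y]
  refine closure_le.2 ?_
  rintro _ (rfl | rfl | rfl)
  · exact ⟨X, X_mul_Y⟩
  · exact ⟨X * X, hEY⟩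
  · refine ⟨X * X * E, ?_⟩
    rwa [mul_assoc _ E, ← mul_assoc E, ← pow_succ', E_pow_three]

theorem xBlocks_le_rightInvertibles : xBlocks ≤ rightInvertibles M := by
  refine closure_le.2 ?_
  rintro _ (rfl | rfl | rfl)
  · exact ⟨Y, X_mul_Y⟩
  · refine ⟨E * Y * Y, ?_⟩
    rw [← mul_assoc, ← mul_assoc, mul_assoc X, ← sq, X_mul_E_sq_mul_Y, X_mul_Y]
  · exact ⟨Y * Y, by rw [← mul_assoc, X_mul_E_sq_mul_Y, X_mul_Y]⟩

theorem E_pow_mul_Y_mem_yBlocks (n : ℕ) : E ^ n * Y ∈ yBlocks := by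
  rcases E_pow_eq_one_or_eq_E_or_eq_E_sq n with h | h | h <;> rw [h] <;>
    apply Submonoid.subset_closure <;> simp

theorem mul_E_mem_xBlocks {r : M} (hr : r ∈ xBlocks) : r = 1 ∨ r * E ∈ xBlocks := by
  induction hr using closure_induction_right with
  | one => exact .inl rfl
  | mul_right r hr b hb _ =>
    refine .inr (mul_assoc r b E ▸ mul_mem hr (Submonoid.subset_closure ?_))
    rcases hb with rfl | rfl | rfl
    · simp
    · simp [mul_assoc, ← sq]
    · simp [mul_assoc, ← pow_succ, E_pow_three]

theorem mul_Y_mem_xBlocks {r : M} (hr : r ∈ xBlocks) : r * Y = Y ∨ r * Y ∈ xBlocks := by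
  induction hr using closure_induction_right with
  | one => exact .inl (one_mul Y)
  | mul_right r hr b hb ih =>
    rcases hb with rfl | rfl | rfl
    · exact .inr (by rwa [mul_assoc, X_mul_Y, mul_one])
    · rwa [mul_assoc, mul_assoc, ← mul_assoc X, X_mul_E_mul_Y]
    · rw [mul_assoc, X_mul_E_sq_mul_Y]
      exact .inr (mul_mem hr (Submonoid.subset_closure (by simp)))

def HasBlockForm (w : M) : Prop :=
  ∃ l ∈ yBlocks, ∃ n : ℕ, ∃ r ∈ xBlocks, w = l * E ^ n * r

namespace HasBlockForm

theorem one : HasBlockForm 1 :=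
  ⟨1, one_mem _, 0, 1, one_mem _, by rw [pow_zero, one_mul, one_mul]⟩

theorem mul_X {w : M} (hw : HasBlockForm w) : HasBlockForm (w * X) := by
  obtain ⟨l, hl, n, r, hr, rfl⟩ := hw
  exact ⟨l, hl, n, r * X, mul_mem hr (Submonoid.subset_closure (by simp)), mul_assoc _ r X⟩

theorem mul_E {w : M} (hw : HasBlockForm w) : HasBlockForm (w * E) := by
  obtain ⟨l, hl, n, r, hr, rfl⟩ := hw
  rcases mul_E_mem_xBlocks hr with rfl | h
  · exact ⟨l, hl, n + 1, 1, one_mem _, by rw [mul_one, mul_one, pow_succ, mul_assoc]⟩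
  · exact ⟨l, hl, n, r * E, h, mul_assoc _ r E⟩

theorem mul_Y {w : M} (hw : HasBlockForm w) : HasBlockForm (w * Y) := by
  obtain ⟨l, hl, n, r, hr, rfl⟩ := hw
  rcases mul_Y_mem_xBlocks hr with h | h
  · refine ⟨l * (E ^ n * Y), mul_mem hl (E_pow_mul_Y_mem_yBlocks n), 0, 1, one_mem _, ?_⟩
    rw [pow_zero, mul_one, mul_one, mul_assoc, h, mul_assoc]
  · exact ⟨l, hl, n, r * Y, h, mul_assoc _ r Y⟩

end HasBlockForm

theorem hasBlockForm (w : M) : HasBlockForm w := by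
  induction w using induction_of_closure_eq_top_right (PresentedMonoid.closure_range_of rel) with
  | one => exact .one
  | mul_right w _ ha hw =>
    obtain ⟨a, rfl⟩ := ha
    cases a
    exacts [hw.mul_X, hw.mul_Y, hw.mul_E]

/-- For every `w ∈ M` there are `p, q ∈ M` with `p·w·q ∈ {1, e, e²}`. -/
theorem stmt_10 : ∀ w : M, ∃ p q : M, p * w * q = 1 ∨ p * w * q = E ∨ p * w * q = E ^ 2 := by
  intro w
  obtain ⟨l, hl, n, r, hr, rfl⟩ := hasBlockForm w
  obtain ⟨p, hp⟩ := yBlocks_le_leftInvertibles hl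
  obtain ⟨q, hq⟩ := xBlocks_le_rightInvertibles hr
  refine ⟨p, q, ?_⟩
  rw [show p * (l * E ^ n * r) * q = p * l * E ^ n * (r * q) by simp only [mul_assoc], hp, hq,
    one_mul, mul_one]
  exact E_pow_eq_one_or_eq_E_or_eq_E_sq n
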